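/- Let A, B be positive definite operators on a Hilbert space and t ∈ [1/2, 1). If A ♮_t B ≤ I, then A^r ♮_{rt/(rt+1-t)} B ≤ I for all r with 0 < r ≤ (1-t)/t. -/

import Mathlib

open scoped NNReal
set_option synthInstance.maxHeartbeats 1000000
set_option maxHeartbeats 1000000

open scoped NNReal ENNReal
set_option linter.unusedSectionVars false
set_option linter.unusedVariables false
set_option maxHeartbeats 1000000
set_option synthInstance.maxHeartbeats 1000000

noncomputable section

variable {H : Type*} [NormedAddCommGroup H] [InnerProductSpace ℂ H] [CompleteSpace H]

/-- The weighted geometric mean `X #_k Y = X^{1/2} (X^{-1/2} Y X^{-1/2})^k X^{1/2}`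
of bounded operators on a Hilbert space (powers via the continuous functional calculus). -/
def owgm (k : ℝ) (X Y : H →L[ℂ] H) : H →L[ℂ] H :=
  X ^ ((1:ℝ)/2) * (X ^ (-(1:ℝ)/2) * Y * X ^ (-(1:ℝ)/2)) ^ k * X ^ ((1:ℝ)/2)

/-- The (k,t)-spectral geometric mean
`F_{k,t}(A,B) = (A⁻¹ #_k B)^t A^{1+2t-4kt} (A⁻¹ #_k B)^t`. -/
def oF (k t : ℝ) (A B : H →L[ℂ] H) : H →L[ℂ] H :=
  (owgm k (Ring.inverse A) B) ^ t * A ^ (1 + 2*t - 4*k*t) * (owgm k (Ring.inverse A) B) ^ t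

/-- The weighted spectral geometric mean `A ♮_t B = (A⁻¹ # B)^t A (A⁻¹ # B)^t`. -/
def snat (t : ℝ) (A B : H →L[ℂ] H) : H →L[ℂ] H :=
  (owgm (1/2) (Ring.inverse A) B) ^ t * A * (owgm (1/2) (Ring.inverse A) B) ^ t

end

namespace AndoHiaiAux

variable {A : Type*} [CStarAlgebra A] [PartialOrder A] [StarOrderedRing A]

lemma spec_nz {a : A} (h : IsUnit a) : (0:ℝ≥0) ∉ spectrum ℝ≥0 a :=
  spectrum.zero_notMem ℝ≥0 h

lemma rpow_isUnit {a : A} (h : IsUnit a) (x : ℝ) (ha : 0 ≤ a := by cfc_tac) :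
    IsUnit (a ^ x) :=
  ⟨⟨a ^ x, a ^ (-x), CFC.rpow_mul_rpow_neg x (h.isStrictlyPositive ha),
    CFC.rpow_neg_mul_rpow x (h.isStrictlyPositive ha)⟩, rfl⟩

lemma rpow_sa {a : A} (x : ℝ) : IsSelfAdjoint (a ^ x) :=
  IsSelfAdjoint.of_nonneg CFC.rpow_nonneg

lemma rpow_mul_rpow {a : A} (x y : ℝ) (h : IsUnit a) (ha : 0 ≤ a := by cfc_tac) :
    a ^ x * a ^ y = a ^ (x + y) :=
  (CFC.rpow_add h).symm

lemma rpow_rpow' {a : A} (x y : ℝ) (h : IsUnit a) (hx : x ≠ 0) (ha : 0 ≤ a := by cfc_tac) :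
    (a ^ x) ^ y = a ^ (x * y) :=
  CFC.rpow_rpow a x y hx (h.isStrictlyPositive ha)

/-- `a⁻¹ = a ^ (-1)` for a nonneg unit, in `Ring.inverse` form. -/
lemma ring_inverse_eq_rpow {a : A} (h : IsUnit a) (ha : 0 ≤ a := by cfc_tac) :
    Ring.inverse a = a ^ (-1 : ℝ) := by
  lift a to Aˣ using h
  rw [Ring.inverse_unit, CFC.rpow_neg_one_eq_inv a ha]

/-- inverse is antitone: from `a ≤ b` conclude `b ^ (-1) ≤ a ^ (-1)`. -/
lemma rpow_neg_one_antitone {a b : A} (ha : 0 ≤ a) (hab : a ≤ b) (hau : IsUnit a) :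
    b ^ (-1 : ℝ) ≤ a ^ (-1 : ℝ) :=
  CStarAlgebra.rpow_neg_one_le_rpow_neg_one hab (hau.isStrictlyPositive ha)

open NormedSpace in
lemma rpow_eq_exp {a : A} (hau : IsUnit a) (α : ℝ) (ha : 0 ≤ a := by cfc_tac) :
    a ^ α = NormedSpace.exp (α • CFC.log a) := by
  have hnz : (0:ℝ) ∉ spectrum ℝ a := spectrum.zero_notMem ℝ hau
  have hpos : ∀ x ∈ spectrum ℝ a, 0 < x := fun x hx =>
    lt_of_le_of_ne (spectrum_nonneg_of_nonneg ha hx) (fun h0 => hnz (h0 ▸ hx))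
  have hsub : spectrum ℝ a ⊆ {(0:ℝ)}ᶜ := fun x hx h0 => hnz (h0 ▸ hx)
  have hlogc : ContinuousOn (fun x : ℝ => α * Real.log x) (spectrum ℝ a) :=
    (Real.continuousOn_log.mono hsub).const_smul α
  have hsa : IsSelfAdjoint a := .of_nonneg ha
  have hlog_sa : IsSelfAdjoint (CFC.log a) := cfc_predicate _ a
  have hlog_smul_sa : IsSelfAdjoint (α • CFC.log a) := (IsSelfAdjoint.smul (by simp : star α = α) hlog_sa : _)
  rw [CFC.rpow_def, cfc_nnreal_eq_real _ a ha]
  have h1 : cfc (fun x : ℝ => ((x.toNNReal ^ α : ℝ≥0) : ℝ)) a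
      = cfc (fun x : ℝ => Real.exp (α * Real.log x)) a := by
    refine cfc_congr fun x hx => ?_
    have hx' := hpos x hx
    rw [NNReal.coe_rpow, Real.coe_toNNReal x hx'.le, Real.rpow_def_of_pos hx', mul_comm]
  rw [h1, ← CFC.real_exp_eq_normedSpace_exp hlog_smul_sa]
  have h2 : α • CFC.log a = cfc (fun x : ℝ => α * Real.log x) a := by
    rw [cfc_const_mul α Real.log a (Real.continuousOn_log.mono hsub)]
    rfl
  rw [h2, ← cfc_comp' Real.exp (fun x : ℝ => α * Real.log x) a
    (Real.continuous_exp.continuousOn) hlogc hsa]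

open NormedSpace in
lemma rpow_cont {a : A} (hau : IsUnit a) (ha : 0 ≤ a) :
    Continuous (fun α : ℝ => a ^ α) := by
  have : (fun α : ℝ => a ^ α) = fun α : ℝ => NormedSpace.exp (α • CFC.log a) := by
    funext α; exact rpow_eq_exp hau α ha
  rw [this]
  have hexpc : Continuous (NormedSpace.exp : A → A) := by
    rw [← continuousOn_univ, ← Metric.eball_top_eq_univ (0 : A), ← expSeries_radius_eq_top ℝ A]
    exact continuousOn_exp
  exact hexpc.comp (continuous_id.smul continuous_const)

omit [PartialOrder A] [StarOrderedRing A] in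
lemma spectralRadius_diff_zero (a : A) :
    spectralRadius ℂ a = ⨆ k ∈ spectrum ℂ a \ {0}, (‖k‖₊ : ℝ≥0∞) := by
  rw [spectralRadius]
  apply le_antisymm
  · refine iSup₂_le fun k hk => ?_
    by_cases h0 : k = 0
    · simp [h0]
    · exact le_iSup₂ (f := fun k (_ : k ∈ spectrum ℂ a \ {0}) => (‖k‖₊ : ℝ≥0∞)) k ⟨hk, h0⟩
  · exact iSup₂_le fun k hk =>
      le_iSup₂ (f := fun k (_ : k ∈ spectrum ℂ a) => (‖k‖₊ : ℝ≥0∞)) k hk.1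

omit [PartialOrder A] [StarOrderedRing A] in
lemma spectralRadius_mul_comm (a b : A) :
    spectralRadius ℂ (a * b) = spectralRadius ℂ (b * a) := by
  rw [spectralRadius_diff_zero, spectralRadius_diff_zero,
    spectrum.nonzero_mul_comm a b]

lemma norm_crit {a b : A} (hau : IsUnit a) (hbu : IsUnit b)
    {δ : ℝ} (hδ : 0 < δ) (ha : 0 ≤ a := by cfc_tac) (hb : 0 ≤ b := by cfc_tac) :
    a ^ δ ≤ b ^ δ ↔ ‖a ^ (δ/2) * b ^ (-(δ/2))‖ ≤ 1 := by
  rw [le_iff_norm_sqrt_mul_rpow (a ^ δ) (b ^ δ) CFC.rpow_nonneg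
      ((rpow_isUnit hbu δ hb).isStrictlyPositive CFC.rpow_nonneg),
    CFC.sqrt_rpow hau hδ.ne', rpow_rpow' δ (-(1/2)) hbu hδ.ne',
    show δ * -(1/2) = -(δ/2) by ring]

lemma norm_midpoint {a b : A} (hau : IsUnit a) (hbu : IsUnit b) {α β : ℝ}
    (h1 : ‖a ^ (α/2) * b ^ (-(α/2))‖ ≤ 1) (h2 : ‖a ^ (β/2) * b ^ (-(β/2))‖ ≤ 1)
    (ha : 0 ≤ a := by cfc_tac) (hb : 0 ≤ b := by cfc_tac) :
    ‖a ^ ((α+β)/4) * b ^ (-((α+β)/4))‖ ≤ 1 := by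
  rcases subsingleton_or_nontrivial A with hsub | hnt
  · simp [Subsingleton.elim (a ^ ((α+β)/4) * b ^ (-((α+β)/4))) 0]
  set γ : ℝ := (α+β)/2 with hγ
  have hγ4 : (α+β)/4 = γ/2 := by rw [hγ]; ring
  rw [hγ4]
  set w : A := a ^ (γ/2) * b ^ (-(γ/2)) with hw
  rw [← sq_le_one_iff₀ (norm_nonneg w), sq, ← CStarRing.norm_self_mul_star]
  have hz : w * star w = a ^ (γ/2) * b ^ (-γ) * a ^ (γ/2) := by
    rw [hw, star_mul, (rpow_sa (a := b) (-(γ/2))).star_eq, (rpow_sa (a := a) (γ/2)).star_eq]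
    calc a ^ (γ/2) * b ^ (-(γ/2)) * (b ^ (-(γ/2)) * a ^ (γ/2))
        = a ^ (γ/2) * (b ^ (-(γ/2)) * b ^ (-(γ/2))) * a ^ (γ/2) := by noncomm_ring
      _ = a ^ (γ/2) * b ^ (-γ) * a ^ (γ/2) := by
          rw [rpow_mul_rpow _ _ hbu hb, show -(γ/2) + -(γ/2) = -γ by ring]
  have hzsa : IsSelfAdjoint (w * star w) := IsSelfAdjoint.mul_star_self w
  have key : (‖w * star w‖₊ : ℝ≥0∞) ≤ 1 := by
    rw [← hzsa.spectralRadius_eq_nnnorm]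
    have e1 : spectralRadius ℂ (w * star w) = spectralRadius ℂ (b ^ (-γ) * a ^ γ) := by
      rw [hz, mul_assoc, spectralRadius_mul_comm, mul_assoc,
        rpow_mul_rpow _ _ hau ha, show γ/2 + γ/2 = γ by ring]
    have e2 : spectralRadius ℂ (b ^ (-γ) * a ^ γ)
        = spectralRadius ℂ ((b ^ (-(α/2)) * a ^ (α/2)) * (a ^ (β/2) * b ^ (-(β/2)))) := by
      have hbsplit : b ^ (-γ) = b ^ (-(β/2)) * b ^ (-(α/2)) := by
        rw [rpow_mul_rpow _ _ hbu hb]; congr 1; rw [hγ]; ring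
      have hasplit : a ^ γ = a ^ (α/2) * a ^ (β/2) := by
        rw [rpow_mul_rpow _ _ hau ha]; congr 1; rw [hγ]; ring
      rw [hbsplit, hasplit]
      calc spectralRadius ℂ (b ^ (-(β/2)) * b ^ (-(α/2)) * (a ^ (α/2) * a ^ (β/2)))
          = spectralRadius ℂ (b ^ (-(β/2)) * (b ^ (-(α/2)) * a ^ (α/2) * a ^ (β/2))) := by
            noncomm_ring
        _ = spectralRadius ℂ (b ^ (-(α/2)) * a ^ (α/2) * a ^ (β/2) * b ^ (-(β/2))) :=
            spectralRadius_mul_comm _ _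
        _ = spectralRadius ℂ ((b ^ (-(α/2)) * a ^ (α/2)) * (a ^ (β/2) * b ^ (-(β/2)))) := by
            noncomm_ring
    rw [e1, e2]
    refine (spectrum.spectralRadius_le_nnnorm (𝕜 := ℂ) _).trans ?_
    have hnorm1 : ‖b ^ (-(α/2)) * a ^ (α/2)‖₊ ≤ 1 := by
      have : b ^ (-(α/2)) * a ^ (α/2) = star (a ^ (α/2) * b ^ (-(α/2))) := by
        rw [star_mul, (rpow_sa (a := b) (-(α/2))).star_eq, (rpow_sa (a := a) (α/2)).star_eq]
      rw [this, nnnorm_star]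
      exact_mod_cast h1
    have hnorm2 : ‖a ^ (β/2) * b ^ (-(β/2))‖₊ ≤ 1 := by exact_mod_cast h2
    have step1 : ‖(b ^ (-(α/2)) * a ^ (α/2)) * (a ^ (β/2) * b ^ (-(β/2)))‖₊
        ≤ ‖b ^ (-(α/2)) * a ^ (α/2)‖₊ * ‖a ^ (β/2) * b ^ (-(β/2))‖₊ := nnnorm_mul_le _ _
    have step2 : ‖b ^ (-(α/2)) * a ^ (α/2)‖₊ * ‖a ^ (β/2) * b ^ (-(β/2))‖₊ ≤ 1 :=
      mul_le_one' hnorm1 hnorm2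
    exact_mod_cast ENNReal.coe_le_coe.mpr (step1.trans step2)
  have : ‖w * star w‖₊ ≤ 1 := by exact_mod_cast key
  calc ‖w * star w‖ = (‖w * star w‖₊ : ℝ) := rfl
    _ ≤ 1 := by exact_mod_cast this

lemma norm_one_le_one : ‖(1 : A)‖ ≤ 1 := by
  rcases subsingleton_or_nontrivial A with h|h
  · simp [Subsingleton.elim (1:A) 0]
  · simp

lemma crit_of_good {a b : A} (hau : IsUnit a) (hbu : IsUnit b) {α : ℝ} (hα : 0 ≤ α)
    (g : a ^ α ≤ b ^ α) (ha : 0 ≤ a := by cfc_tac) (hb : 0 ≤ b := by cfc_tac) :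
    ‖a ^ (α/2) * b ^ (-(α/2))‖ ≤ 1 := by
  rcases eq_or_lt_of_le hα with h0 | hpos
  · rw [← h0]
    norm_num
    rw [CFC.rpow_zero a ha, CFC.rpow_zero b hb, one_mul]
    exact norm_one_le_one
  · exact (norm_crit hau hbu hpos ha hb).mp g

lemma good_midpoint {a b : A} (hau : IsUnit a) (hbu : IsUnit b) {α β : ℝ}
    (hα : 0 ≤ α) (hβ : 0 ≤ β) (g1 : a ^ α ≤ b ^ α) (g2 : a ^ β ≤ b ^ β)
    (ha : 0 ≤ a := by cfc_tac) (hb : 0 ≤ b := by cfc_tac) :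
    a ^ ((α+β)/2) ≤ b ^ ((α+β)/2) := by
  rcases eq_or_lt_of_le (by linarith : (0:ℝ) ≤ (α+β)/2) with h0 | hpos
  · rw [← h0, CFC.rpow_zero a ha, CFC.rpow_zero b hb]
  · refine (norm_crit hau hbu hpos ha hb).mpr ?_
    rw [show (α+β)/2/2 = (α+β)/4 by ring]
    exact norm_midpoint hau hbu (crit_of_good hau hbu hα g1 ha hb)
      (crit_of_good hau hbu hβ g2 ha hb) ha hb

open Filter Topology in
/-- Löwner–Heinz for nonnegative invertible elements. -/
theorem loewner_heinz {a b : A} (hau : IsUnit a) (hab : a ≤ b) {α : ℝ}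
    (hα0 : 0 ≤ α) (hα1 : α ≤ 1) (ha : 0 ≤ a := by cfc_tac) (hb : 0 ≤ b := by cfc_tac) :
    a ^ α ≤ b ^ α := by
  have hbu : IsUnit b := CStarAlgebra.isUnit_of_le a hab (hau.isStrictlyPositive ha)
  have S_closed : IsClosed {x : ℝ | a ^ x ≤ b ^ x} := by
    have he : {x : ℝ | a ^ x ≤ b ^ x} = (fun x => b ^ x - a ^ x) ⁻¹' {y : A | 0 ≤ y} := by
      ext x; simp [sub_nonneg]
    rw [he]
    exact CStarAlgebra.isClosed_nonneg.preimage ((rpow_cont hbu hb).sub (rpow_cont hau ha))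
  have dyadic : ∀ n : ℕ, ∀ k : ℕ, k ≤ 2^n → a ^ ((k : ℝ)/2^n) ≤ b ^ ((k:ℝ)/2^n) := by
    intro n
    induction n with
    | zero =>
      intro k hk
      interval_cases k
      · norm_num
        rw [CFC.rpow_zero a ha, CFC.rpow_zero b hb]
      · norm_num
        rwa [CFC.rpow_one a ha, CFC.rpow_one b hb]
    | succ n ih =>
      intro k hk
      rcases Nat.even_or_odd k with ⟨m, hm⟩ | ⟨m, hm⟩
      · have hm' : m ≤ 2^n := by subst hm; rw [pow_succ] at hk; omega
        have he : (k:ℝ)/2^(n+1) = (m:ℝ)/2^n := by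
          subst hm; push_cast; rw [pow_succ]; field_simp; ring
        rw [he]
        exact ih m hm'
      · have hm1 : m ≤ 2^n := by subst hm; rw [pow_succ] at hk; omega
        have hm2 : m+1 ≤ 2^n := by subst hm; rw [pow_succ] at hk; omega
        have hmid := good_midpoint hau hbu
          (by positivity : (0:ℝ) ≤ (m:ℝ)/2^n)
          (by positivity : (0:ℝ) ≤ ((m:ℝ)+1)/2^n)
          (ih m hm1) (by exact_mod_cast ih (m+1) hm2) ha hb
        have he : (k:ℝ)/2^(n+1) = ((m:ℝ)/2^n + ((m:ℝ)+1)/2^n)/2 := by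
          subst hm; push_cast; rw [pow_succ]; field_simp; ring
        rw [he]
        exact hmid
  set c : ℕ → ℝ := fun n => (⌊(2:ℝ)^n * α⌋₊ : ℝ)/2^n with hc
  have hmem : ∀ n, c n ∈ {x : ℝ | a ^ x ≤ b ^ x} := by
    intro n
    have hfl : ⌊(2:ℝ)^n * α⌋₊ ≤ 2^n := by
      have h1 : (2:ℝ)^n * α ≤ ((2^n : ℕ):ℝ) := by
        push_cast
        nlinarith [pow_pos (by norm_num : (0:ℝ) < 2) n]
      calc ⌊(2:ℝ)^n * α⌋₊ ≤ ⌊((2^n : ℕ):ℝ)⌋₊ := Nat.floor_mono h1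
        _ = 2^n := Nat.floor_natCast _
    have := dyadic n ⌊(2:ℝ)^n * α⌋₊ hfl
    simpa [hc] using this
  have htend : Tendsto c atTop (𝓝 α) := by
    have h2n : ∀ n : ℕ, (0:ℝ) < 2^n := fun n => by positivity
    have hub : ∀ n, c n ≤ α := by
      intro n
      rw [hc]
      have := Nat.floor_le (by positivity : (0:ℝ) ≤ (2:ℝ)^n * α)
      rw [div_le_iff₀ (h2n n)]
      linarith
    have hlb : ∀ n, α - (1/2)^n ≤ c n := by
      intro n
      have := Nat.lt_floor_add_one ((2:ℝ)^n * α)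
      rw [hc]
      rw [sub_le_iff_le_add, div_add' _ _ _ (h2n n).ne', le_div_iff₀ (h2n n)]
      have : (2:ℝ)^n * α < (⌊(2:ℝ)^n * α⌋₊ : ℝ) + 1 := this
      have hpow : (1/2:ℝ)^n * 2^n = 1 := by
        rw [← mul_pow]; norm_num
      nlinarith [h2n n]
    have hlbt : Tendsto (fun n : ℕ => α - (1/2:ℝ)^n) atTop (𝓝 α) := by
      have : Tendsto (fun n : ℕ => (1/2:ℝ)^n) atTop (𝓝 0) :=
        tendsto_pow_atTop_nhds_zero_of_lt_one (by norm_num) (by norm_num)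
      simpa using tendsto_const_nhds.sub this
    exact tendsto_of_tendsto_of_tendsto_of_le_of_le hlbt tendsto_const_nhds hlb hub
  exact S_closed.mem_of_tendsto htend (Filter.Eventually.of_forall hmem)

/-- The operator geometric mean `a⁻¹ # b`, written in `rpow` form. -/
noncomputable def gmean (a b : A) : A :=
  a ^ (-(1/2) : ℝ) * (a ^ ((1/2) : ℝ) * b * a ^ ((1/2) : ℝ)) ^ ((1/2) : ℝ) * a ^ (-(1/2) : ℝ)

lemma inner_nonneg (a b : A) (hb : 0 ≤ b) :
    0 ≤ a ^ ((1/2):ℝ) * b * a ^ ((1/2):ℝ) :=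
  conjugate_nonneg_of_nonneg hb CFC.rpow_nonneg

lemma inner_isUnit {a b : A} (hau : IsUnit a) (hbu : IsUnit b) (ha : 0 ≤ a := by cfc_tac) :
    IsUnit (a ^ ((1/2):ℝ) * b * a ^ ((1/2):ℝ)) :=
  ((rpow_isUnit hau _ ha).mul hbu).mul (rpow_isUnit hau _ ha)

lemma gmean_nonneg (a b : A) (hb : 0 ≤ b) : 0 ≤ gmean a b :=
  conjugate_nonneg_of_nonneg CFC.rpow_nonneg CFC.rpow_nonneg

lemma gmean_isUnit {a b : A} (hau : IsUnit a) (hbu : IsUnit b) (ha : 0 ≤ a := by cfc_tac)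
    (hb : 0 ≤ b := by cfc_tac) : IsUnit (gmean a b) :=
  ((rpow_isUnit hau _ ha).mul
    (rpow_isUnit (inner_isUnit hau hbu ha) _ (inner_nonneg a b hb))).mul (rpow_isUnit hau _ ha)

lemma gmean_conj {a b : A} (hau : IsUnit a) (hbu : IsUnit b) (ha : 0 ≤ a := by cfc_tac)
    (hb : 0 ≤ b := by cfc_tac) : gmean a b * a * gmean a b = b := by
  set m : A := a ^ ((1/2):ℝ) * b * a ^ ((1/2):ℝ) with hm
  have hm0 : 0 ≤ m := inner_nonneg a b hb
  have hmu : IsUnit m := inner_isUnit hau hbu ha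
  set p : A := a ^ (-(1/2):ℝ) with hp
  set p' : A := a ^ ((1/2):ℝ) with hp'
  set q : A := m ^ ((1/2):ℝ) with hq
  have hg : gmean a b = p * q * p := rfl
  have hinv : p * a * p = 1 := CFC.conjugate_rpow_neg_one_half a (hau.isStrictlyPositive ha)
  have hS : q * q = m := by
    rw [hq, rpow_mul_rpow _ _ hmu hm0, show (1/2 : ℝ) + 1/2 = 1 by norm_num, CFC.rpow_one m hm0]
  have hao : p * p' = 1 := by
    rw [hp, hp', rpow_mul_rpow _ _ hau ha, show (-(1/2) : ℝ) + 1/2 = 0 by norm_num,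
      CFC.rpow_zero a ha]
  have hao' : p' * p = 1 := by
    rw [hp, hp', rpow_mul_rpow _ _ hau ha, show (1/2 : ℝ) + -(1/2) = 0 by norm_num,
      CFC.rpow_zero a ha]
  calc gmean a b * a * gmean a b
      = p * q * (p * a * p) * q * p := by rw [hg]; noncomm_ring
    _ = p * (q * q) * p := by rw [hinv]; noncomm_ring
    _ = p * m * p := by rw [hS]
    _ = (p * p') * b * (p' * p) := by rw [hm]; noncomm_ring
    _ = b := by rw [hao, hao', one_mul, mul_one]

lemma gmean_le {a b : A} (hau : IsUnit a) (hbu : IsUnit b) {u : ℝ}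
    (hu : b ≤ a ^ (-u)) (ha : 0 ≤ a := by cfc_tac) (hb : 0 ≤ b := by cfc_tac) :
    gmean a b ≤ a ^ (-((1+u)/2)) := by
  set m : A := a ^ ((1/2):ℝ) * b * a ^ ((1/2):ℝ) with hm
  have hm0 : 0 ≤ m := inner_nonneg a b hb
  have hmu : IsUnit m := inner_isUnit hau hbu ha
  have h1 : m ≤ a ^ (1-u) := by
    calc m ≤ a ^ ((1/2):ℝ) * a ^ (-u) * a ^ ((1/2):ℝ) :=
          conjugate_le_conjugate_of_nonneg hu CFC.rpow_nonneg
      _ = a ^ (1-u) := by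
          rw [rpow_mul_rpow _ _ hau ha, rpow_mul_rpow _ _ hau ha,
            show (1/2 : ℝ) + -u + 1/2 = 1 - u by ring]
  have h2 : m ^ ((1/2):ℝ) ≤ (a ^ (1-u)) ^ ((1/2):ℝ) :=
    loewner_heinz hmu h1 (by norm_num) (by norm_num) hm0 CFC.rpow_nonneg
  have h3 : (a ^ (1-u)) ^ ((1/2):ℝ) = a ^ ((1-u)/2) := by
    rcases eq_or_ne (1-u) 0 with h0 | h0
    · rw [h0, CFC.rpow_zero a ha, show (0:ℝ)/2 = 0 by norm_num, CFC.rpow_zero a ha, CFC.one_rpow]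
    · rw [rpow_rpow' _ _ hau h0 ha, show (1-u) * (1/2) = (1-u)/2 by ring]
  have h4 : gmean a b ≤ a ^ (-(1/2):ℝ) * a ^ ((1-u)/2) * a ^ (-(1/2):ℝ) := by
    rw [gmean, ← hm, ← h3]
    exact conjugate_le_conjugate_of_nonneg h2 CFC.rpow_nonneg
  calc gmean a b ≤ a ^ (-(1/2):ℝ) * a ^ ((1-u)/2) * a ^ (-(1/2):ℝ) := h4
    _ = a ^ (-((1+u)/2)) := by
        rw [rpow_mul_rpow _ _ hau ha, rpow_mul_rpow _ _ hau ha,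
          show (-(1/2) : ℝ) + (1-u)/2 + -(1/2) = -((1+u)/2) by ring]

lemma conj_pow_le_one {x c : A} (hxu : IsUnit x) (hcu : IsUnit c) {s : ℝ} (hs : s ≠ 0)
    (hle : c ^ (2*s) ≤ x ^ (-1 : ℝ)) (hx : 0 ≤ x := by cfc_tac) (hc : 0 ≤ c := by cfc_tac) :
    c ^ s * x * c ^ s ≤ 1 := by
  have h2s : (2:ℝ) * s ≠ 0 := by simpa using hs
  have h1 : x ≤ c ^ (-(2*s)) := by
    have := rpow_neg_one_antitone CFC.rpow_nonneg hle (rpow_isUnit hcu _ hc)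
    rwa [rpow_rpow' _ _ hxu (by norm_num) hx, rpow_rpow' _ _ hcu h2s hc,
      show (-1 : ℝ) * -1 = 1 by norm_num, CFC.rpow_one x hx,
      show (2*s) * (-1 : ℝ) = -(2*s) by ring] at this
  calc c ^ s * x * c ^ s ≤ c ^ s * c ^ (-(2*s)) * c ^ s :=
        conjugate_le_conjugate_of_nonneg h1 CFC.rpow_nonneg
    _ = 1 := by
        rw [rpow_mul_rpow _ _ hcu hc, rpow_mul_rpow _ _ hcu hc,
          show s + -(2*s) + s = 0 by ring, CFC.rpow_zero c hc]

/-- Step 1: `A ♮_t B ≤ 1` implies `B ≤ A^{-(1-t)/t}`. -/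
lemma step1 {a b : A} (hau : IsUnit a) (hbu : IsUnit b) {t : ℝ}
    (ht1 : 1/2 ≤ t) (ht2 : t < 1)
    (h : gmean a b ^ t * a * gmean a b ^ t ≤ 1)
    (ha : 0 ≤ a := by cfc_tac) (hb : 0 ≤ b := by cfc_tac) :
    b ≤ a ^ (-((1-t)/t)) := by
  have ht0 : 0 < t := lt_of_lt_of_le (by norm_num) ht1
  have htne : t ≠ 0 := ht0.ne'
  set c : A := gmean a b with hcdef
  have hc0 : 0 ≤ c := gmean_nonneg a b hb
  have hcu : IsUnit c := gmean_isUnit hau hbu ha hb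
  -- a ≤ c ^ (-2t)
  have hA : a ≤ c ^ (-(2*t)) := by
    have hconj := conjugate_le_conjugate_of_nonneg h (CFC.rpow_nonneg (a := c) (y := -t))
    rw [mul_one] at hconj
    have e1 : c ^ (-t) * (c ^ t * a * c ^ t) * c ^ (-t)
        = (c ^ (-t) * c ^ t) * a * (c ^ t * c ^ (-t)) := by noncomm_ring
    have e2 : c ^ (-t) * c ^ t = 1 := by
      rw [rpow_mul_rpow _ _ hcu hc0, neg_add_cancel, CFC.rpow_zero c hc0]
    have e3 : c ^ t * c ^ (-t) = 1 := by
      rw [rpow_mul_rpow _ _ hcu hc0, add_neg_cancel, CFC.rpow_zero c hc0]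
    have e4 : c ^ (-t) * c ^ (-t) = c ^ (-(2*t)) := by
      rw [rpow_mul_rpow _ _ hcu hc0, show -t + -t = -(2*t) by ring]
    calc a = (c ^ (-t) * c ^ t) * a * (c ^ t * c ^ (-t)) := by rw [e2, e3, one_mul, mul_one]
      _ = c ^ (-t) * (c ^ t * a * c ^ t) * c ^ (-t) := by noncomm_ring
      _ ≤ c ^ (-t) * c ^ (-t) := hconj
      _ = c ^ (-(2*t)) := e4
  -- b ≤ c ^ (2 - 2t)
  have hB : b ≤ c ^ (2 - 2*t) := by
    calc b = c * a * c := (gmean_conj hau hbu ha hb).symm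
      _ ≤ c * c ^ (-(2*t)) * c := conjugate_le_conjugate_of_nonneg hA hc0
      _ = c ^ (2 - 2*t) := by
          nth_rw 1 [← CFC.rpow_one c hc0]
          nth_rw 3 [← CFC.rpow_one c hc0]
          rw [rpow_mul_rpow _ _ hcu hc0, rpow_mul_rpow _ _ hcu hc0,
            show (1:ℝ) + -(2*t) + 1 = 2 - 2*t by ring]
  -- c ^ (2t) ≤ a ^ (-1)
  have hC : c ^ (2*t) ≤ a ^ (-1 : ℝ) := by
    have := rpow_neg_one_antitone ha hA hau
    rwa [rpow_rpow' _ _ hcu (by simpa using (mul_pos two_pos ht0).ne' : -(2*t) ≠ 0) hc0,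
      show (-(2*t)) * (-1 : ℝ) = 2*t by ring] at this
  -- Löwner–Heinz with exponent (1-t)/t
  have hθ0 : 0 < (1-t)/t := div_pos (by linarith) ht0
  have hθ1 : (1-t)/t ≤ 1 := by
    rw [div_le_one ht0]; linarith
  have hD := loewner_heinz (rpow_isUnit hcu _ hc0) hC hθ0.le hθ1 CFC.rpow_nonneg CFC.rpow_nonneg
  rw [rpow_rpow' _ _ hcu (by positivity : (2:ℝ)*t ≠ 0) hc0,
    rpow_rpow' _ _ hau (by norm_num) ha,
    show (2*t) * ((1-t)/t) = 2 - 2*t by field_simp,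
    show (-1 : ℝ) * ((1-t)/t) = -((1-t)/t) by ring] at hD
  exact hB.trans hD

/-- Step 2: if `b ≤ x^{-u}` then `x ♮_s b ≤ 1` provided `2s ≤ 1` and `(1+u)s = 1`. -/
lemma step2 {x b : A} (hxu : IsUnit x) (hbu : IsUnit b) {u s : ℝ} (hu : 0 ≤ u)
    (hs : 0 < s) (h2s : 2*s ≤ 1) (hexp : (1+u)*s = 1)
    (hbound : b ≤ x ^ (-u)) (hx : 0 ≤ x := by cfc_tac) (hb : 0 ≤ b := by cfc_tac) :
    gmean x b ^ s * x * gmean x b ^ s ≤ 1 := by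
  have hc0 : 0 ≤ gmean x b := gmean_nonneg x b hb
  have hcu : IsUnit (gmean x b) := gmean_isUnit hxu hbu hx hb
  have h1 : gmean x b ≤ x ^ (-((1+u)/2)) := gmean_le hxu hbu hbound hx hb
  have h2 : gmean x b ^ (2*s) ≤ (x ^ (-((1+u)/2))) ^ (2*s) :=
    loewner_heinz hcu h1 (by linarith) h2s hc0 CFC.rpow_nonneg
  rw [rpow_rpow' _ _ hxu (show -((1+u)/2) ≠ 0 by intro hcon; rw [neg_eq_zero] at hcon; nlinarith) hx,
    show -((1+u)/2) * (2*s) = -((1+u)*s) by ring, hexp] at h2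
  exact conj_pow_le_one hxu hcu hs.ne' h2 hx hc0

end AndoHiaiAux

section Bridge

variable {H : Type*} [NormedAddCommGroup H] [InnerProductSpace ℂ H] [CompleteSpace H]

lemma AndoHiaiAux.owgm_eq_gmean (a b : H →L[ℂ] H) (hau : IsUnit a) (ha : 0 ≤ a) :
    owgm (1/2) (Ring.inverse a) b = AndoHiaiAux.gmean a b := by
  rw [owgm, AndoHiaiAux.gmean, AndoHiaiAux.ring_inverse_eq_rpow hau ha,
    AndoHiaiAux.rpow_rpow' (-1) ((1:ℝ)/2) hau (by norm_num) ha,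
    AndoHiaiAux.rpow_rpow' (-1) (-(1:ℝ)/2) hau (by norm_num) ha,
    show (-1 : ℝ) * ((1:ℝ)/2) = -(1/2) by norm_num,
    show (-1 : ℝ) * (-(1:ℝ)/2) = 1/2 by norm_num]

end Bridge

/-- One-sided Ando–Hiai: if `t ∈ [1/2,1)` and `A ♮_t B ≤ I`, then
`A^r ♮_{rt/(rt+1-t)} B ≤ I` for `0 < r ≤ (1-t)/t`. -/
theorem stmt12 {H : Type*} [NormedAddCommGroup H] [InnerProductSpace ℂ H] [CompleteSpace H]
    (A B : H →L[ℂ] H) (hA : 0 ≤ A) (hAu : IsUnit A) (hB : 0 ≤ B) (hBu : IsUnit B)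
    (t : ℝ) (ht : t ∈ Set.Ico (1/2 : ℝ) 1)
    (h : snat t A B ≤ 1)
    (r : ℝ) (hr : 0 < r) (hr2 : r ≤ (1-t)/t) :
    snat (r*t/(r*t + 1 - t)) (A ^ r) B ≤ 1 := by
  classical
  obtain ⟨ht1, ht2⟩ := ht
  have ht0 : (0:ℝ) < t := by linarith
  have h1t : (0:ℝ) < 1 - t := by linarith
  have hrt : 0 < r*t := mul_pos hr ht0
  have hden : 0 < r*t + 1 - t := by linarith
  have hrtle : r*t ≤ 1 - t := (le_div_iff₀ ht0).mp hr2
  -- the hypothesis in `gmean` form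
  unfold snat at h ⊢
  rw [AndoHiaiAux.owgm_eq_gmean A B hAu hA] at h
  have hbound : B ≤ A ^ (-((1-t)/t)) :=
    AndoHiaiAux.step1 hAu hBu ht1 ht2 h hA hB
  have hAr0 : (0:H →L[ℂ] H) ≤ A ^ r := CFC.rpow_nonneg
  have hAru : IsUnit (A ^ r) := AndoHiaiAux.rpow_isUnit hAu r hA
  rw [AndoHiaiAux.owgm_eq_gmean (A ^ r) B hAru hAr0]
  set u : ℝ := (1-t)/(t*r) with hu_def
  have hu0 : 0 ≤ u := by positivity
  have hs0 : 0 < r*t/(r*t + 1 - t) := div_pos hrt hden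
  have h2s : 2*(r*t/(r*t + 1 - t)) ≤ 1 := by
    rw [show (2:ℝ) * (r*t/(r*t + 1 - t)) = (2*(r*t))/(r*t + 1 - t) by ring, div_le_one hden]
    linarith
  have hexp : (1+u)*(r*t/(r*t + 1 - t)) = 1 := by
    rw [hu_def]
    field_simp
    linear_combination mul_inv_cancel₀ (show (0:ℝ) < 1 - t + t*r by nlinarith).ne'
  have hbound' : B ≤ (A ^ r) ^ (-u) := by
    rwa [AndoHiaiAux.rpow_rpow' r (-u) hAu hr.ne' hA,
      show r * (-u) = -((1-t)/t) by rw [hu_def]; field_simp]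
  exact AndoHiaiAux.step2 hAru hBu hu0 hs0 h2s hexp hbound' hAr0 hB
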